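/- arXiv:1910.08125 — 2 statements merged into one kernel-verified Lean document; each statement's English description precedes it below -/
import Mathlib

section
/- For each k in {1,...,n}, the set P^k_+ := {z in R^n : s^+(z) ≤ k-1} is the topological interior of the set P^k_- := {z in R^n : s^-(z) ≤ k-1}, and P^k_- is closed. -/
/-!
Every `y` close to `z` has the sign of `z` at each index where `z` is nonzero. Deleting zeros
then shows that `s⁻` can only go up near `z`, and filling zeros that `s⁺` can only go down, so
`s⁻` is lower and `s⁺` upper semicontinuous: `P⁻` is closed and `P⁺` is open, and `s⁻ ≤ s⁺` puts
`P⁺` inside the interior of `P⁻`. Conversely, pushing the zero entries of `z` slightly in the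
directions of an optimal `±1` filling gives points arbitrarily close to `z` with `s⁻ = s⁺ z`, so
the interior of `P⁻` lies in `P⁺`.
-/

open Classical

/-- Number of sign variations in a list of reals (adjacent pairs with negative product). -/
noncomputable def signVarAux : List ℝ → ℕ
  | [] => 0
  | [_] => 0
  | a :: b :: t => (if a * b < 0 then 1 else 0) + signVarAux (b :: t)

/-- `s⁻(y)`: sign variations after deleting zero entries. -/
noncomputable def sminus {n : ℕ} (y : Fin n → ℝ) : ℕ :=
  signVarAux ((List.ofFn y).filter (fun x => decide (x ≠ 0)))

/-- `s⁺(y)`: maximal sign variations after replacing each zero entry by `+1` or `-1`. -/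
noncomputable def splus {n : ℕ} (y : Fin n → ℝ) : ℕ :=
  Finset.univ.sup fun σ : Fin n → Bool =>
    signVarAux (List.ofFn fun i => if y i = 0 then (if σ i then (1:ℝ) else -1) else y i)

/-- `A` is strictly sign-regular of order `k`. -/
def SSRk {n m : ℕ} (A : Matrix (Fin n) (Fin m) ℝ) (k : ℕ) : Prop :=
  (∀ (α : Fin k → Fin n) (β : Fin k → Fin m), StrictMono α → StrictMono β →
      0 < (A.submatrix α β).det) ∨
  (∀ (α : Fin k → Fin n) (β : Fin k → Fin m), StrictMono α → StrictMono β →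
      (A.submatrix α β).det < 0)

/-- `A` is sign-regular of order `k`. -/
def SRk {n m : ℕ} (A : Matrix (Fin n) (Fin m) ℝ) (k : ℕ) : Prop :=
  (∀ (α : Fin k → Fin n) (β : Fin k → Fin m), StrictMono α → StrictMono β →
      0 ≤ (A.submatrix α β).det) ∨
  (∀ (α : Fin k → Fin n) (β : Fin k → Fin m), StrictMono α → StrictMono β →
      (A.submatrix α β).det ≤ 0)

noncomputable instance {k n : ℕ} : Fintype {s : Fin k → Fin n // StrictMono s} :=
  Fintype.ofFinite _

/-- The `k`-th multiplicative compound of `A`. -/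
noncomputable def compound {n m : ℕ} (k : ℕ) (A : Matrix (Fin n) (Fin m) ℝ) :
    Matrix {s : Fin k → Fin n // StrictMono s} {s : Fin k → Fin m // StrictMono s} ℝ :=
  fun α β => (A.submatrix α.1 β.1).det

open Filter Topology

lemma signVarAux_cons_cons (a b : ℝ) (l : List ℝ) :
    signVarAux (a :: b :: l) = (if a * b < 0 then 1 else 0) + signVarAux (b :: l) := rfl

lemma signVarAux_zero_cons (l : List ℝ) : signVarAux (0 :: l) = signVarAux l := by
  cases l <;> simp [signVarAux]

lemma signVarAux_eq_of_forall₂ {l₁ l₂ : List ℝ} (h : List.Forall₂ (fun a b => 0 < a * b) l₁ l₂) :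
    signVarAux l₁ = signVarAux l₂ := by
  induction h with
  | nil => rfl
  | @cons a b l₁ l₂ hab htail ih =>
    rcases htail with _ | @⟨c, d, _, _, hcd, _⟩
    · rfl
    · have hsign : a * c < 0 ↔ b * d < 0 := by
        constructor <;> intro h <;> nlinarith
      rw [signVarAux_cons_cons, signVarAux_cons_cons, ih]
      simp only [hsign]

lemma signVarAux_cons_le_cons_cons (a : ℝ) {b : ℝ} (hb : b ≠ 0) (l : List ℝ) :
    signVarAux (a :: l) ≤ signVarAux (a :: b :: l) := by
  rcases l with _ | ⟨c, l⟩
  · simp [signVarAux]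
  · have hbb : 0 < b * b := mul_self_pos.mpr hb
    have hsplit : a * c < 0 → a * b < 0 ∨ b * c < 0 := by
      intro hac; by_contra! h; nlinarith
    simp only [signVarAux_cons_cons]
    split_ifs <;> first | omega | simp_all

lemma signVarAux_cons_le_of_sublist {l₁ l₂ : List ℝ} (h : l₁.Sublist l₂)
    (hl₂ : ∀ x ∈ l₂, x ≠ 0) (a : ℝ) : signVarAux (a :: l₁) ≤ signVarAux (a :: l₂) := by
  induction h generalizing a with
  | slnil => rfl
  | @cons l₁ l₂ b _ ih =>
    exact (ih (fun x hx => hl₂ x (.tail _ hx)) a).trans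
      (signVarAux_cons_le_cons_cons a (hl₂ b (.head _)) l₂)
  | @cons_cons l₁ l₂ b _ ih =>
    simp only [signVarAux_cons_cons]
    have := ih (fun x hx => hl₂ x (.tail _ hx)) b
    omega

lemma signVarAux_le_of_sublist {l₁ l₂ : List ℝ} (h : l₁.Sublist l₂) (hl₂ : ∀ x ∈ l₂, x ≠ 0) :
    signVarAux l₁ ≤ signVarAux l₂ := by
  simpa only [signVarAux_zero_cons] using signVarAux_cons_le_of_sublist h hl₂ 0

lemma exists_sublist_forall₂_filter_ne_zero {l₁ l₂ : List ℝ}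
    (h : List.Forall₂ (fun a b => b ≠ 0 → 0 < a * b) l₁ l₂) :
    ∃ m : List ℝ, m.Sublist (l₁.filter fun x => decide (x ≠ 0)) ∧
      List.Forall₂ (fun a b => 0 < a * b) m (l₂.filter fun x => decide (x ≠ 0)) := by
  induction h with
  | nil => exact ⟨[], by simp⟩
  | @cons a b l₁ l₂ hab _ ih =>
    obtain ⟨m, hm, hm₂⟩ := ih
    by_cases hb : b = 0
    · refine ⟨m, hm.trans ((List.sublist_cons_self a l₁).filter _), ?_⟩
      simpa [hb] using hm₂
    · have hab := hab hb
      have ha : a ≠ 0 := by rintro rfl; simp at hab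
      refine ⟨a :: m, ?_, ?_⟩
      · simpa [ha] using hm.cons_cons a
      · simpa [hb] using List.Forall₂.cons (R := fun a b => 0 < a * b) hab hm₂

lemma signVarAux_filter_le_of_forall₂ {l₁ l₂ : List ℝ}
    (h : List.Forall₂ (fun a b => b ≠ 0 → 0 < a * b) l₁ l₂) :
    signVarAux (l₂.filter fun x => decide (x ≠ 0)) ≤
      signVarAux (l₁.filter fun x => decide (x ≠ 0)) := by
  obtain ⟨m, hm, hm₂⟩ := exists_sublist_forall₂_filter_ne_zero h
  rw [← signVarAux_eq_of_forall₂ hm₂]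
  exact signVarAux_le_of_sublist hm fun x hx => by simpa using List.of_mem_filter hx

lemma List.forall₂_ofFn {α β : Type*} {R : α → β → Prop} {n : ℕ} {f : Fin n → α}
    {g : Fin n → β} (h : ∀ i, R (f i) (g i)) : List.Forall₂ R (List.ofFn f) (List.ofFn g) :=
  List.forall₂_iff_get.2 ⟨by simp, fun i _ _ => by simpa using h _⟩

section

variable {n : ℕ}

lemma sminus_le_sminus_of_forall_mul_pos {y z : Fin n → ℝ}
    (h : ∀ i, z i ≠ 0 → 0 < y i * z i) : sminus z ≤ sminus y :=
  signVarAux_filter_le_of_forall₂ (List.forall₂_ofFn h)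

lemma sminus_eq_of_forall_mul_pos {y z : Fin n → ℝ} (h : ∀ i, 0 < y i * z i) :
    sminus y = sminus z :=
  le_antisymm (sminus_le_sminus_of_forall_mul_pos fun i _ => by linarith [h i])
    (sminus_le_sminus_of_forall_mul_pos fun i _ => h i)

lemma sminus_eq_signVarAux_ofFn {y : Fin n → ℝ} (hy : ∀ i, y i ≠ 0) :
    sminus y = signVarAux (List.ofFn y) := by
  rw [sminus, List.filter_eq_self.2]
  simpa [List.mem_ofFn] using hy

noncomputable def fillZeros (y : Fin n → ℝ) (σ : Fin n → Bool) : Fin n → ℝ :=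
  fun i => if y i = 0 then (if σ i then 1 else -1) else y i

lemma fillZeros_ne_zero (y : Fin n → ℝ) (σ : Fin n → Bool) (i : Fin n) :
    fillZeros y σ i ≠ 0 := by
  unfold fillZeros; split_ifs <;> norm_num [*]

lemma fillZeros_of_ne_zero {y : Fin n → ℝ} (σ : Fin n → Bool) {i : Fin n} (hi : y i ≠ 0) :
    fillZeros y σ i = y i :=
  if_neg hi

lemma splus_eq_sup_sminus_fillZeros (y : Fin n → ℝ) :
    splus y = Finset.univ.sup fun σ => sminus (fillZeros y σ) := by
  simp only [sminus_eq_signVarAux_ofFn (fillZeros_ne_zero y _)]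
  rfl

lemma sminus_le_splus (y : Fin n → ℝ) : sminus y ≤ splus y := by
  rw [splus_eq_sup_sminus_fillZeros]
  refine le_trans ?_ (Finset.le_sup (Finset.mem_univ fun _ => true))
  refine sminus_le_sminus_of_forall_mul_pos fun i hi => ?_
  rw [fillZeros_of_ne_zero _ hi]
  exact mul_self_pos.2 hi

lemma splus_le_splus_of_forall_mul_pos {y z : Fin n → ℝ}
    (h : ∀ i, z i ≠ 0 → 0 < y i * z i) : splus y ≤ splus z := by
  rw [splus_eq_sup_sminus_fillZeros, splus_eq_sup_sminus_fillZeros]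
  refine Finset.sup_le fun σ _ => ?_
  set c := fillZeros y σ
  set τ : Fin n → Bool := fun i => decide (0 < c i)
  have hsign : ∀ i, 0 < c i * fillZeros z τ i := by
    intro i
    by_cases hzi : z i = 0
    · have hci := fillZeros_ne_zero y σ i
      simp only [fillZeros, hzi, τ, if_true]
      split_ifs with hc
      · simpa using hc
      · simp only [decide_eq_true_eq] at hc
        nlinarith [lt_of_le_of_ne (not_lt.1 hc) hci]
    · have hyz := h i hzi
      have hyi : y i ≠ 0 := by rintro h0; simp [h0] at hyz
      rwa [fillZeros_of_ne_zero τ hzi, show c i = y i from fillZeros_of_ne_zero σ hyi]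
  rw [sminus_eq_of_forall_mul_pos hsign]
  exact Finset.le_sup (f := fun σ => sminus (fillZeros z σ)) (Finset.mem_univ τ)

lemma eventually_forall_mul_pos (z : Fin n → ℝ) :
    ∀ᶠ y in 𝓝 z, ∀ i, z i ≠ 0 → 0 < y i * z i := by
  refine eventually_all.2 fun i => ?_
  by_cases hzi : z i = 0
  · exact .of_forall fun _ h => absurd hzi h
  · have hcont : Continuous fun y : Fin n → ℝ => y i * z i := by fun_prop
    filter_upwards [continuousAt_const.eventually_lt hcont.continuousAt (mul_self_pos.2 hzi)]
      with y hy _ using hy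

lemma lowerSemicontinuous_sminus : LowerSemicontinuous (sminus : (Fin n → ℝ) → ℕ) :=
  fun z _ hm => (eventually_forall_mul_pos z).mono fun _ hy =>
    hm.trans_le (sminus_le_sminus_of_forall_mul_pos hy)

lemma upperSemicontinuous_splus : UpperSemicontinuous (splus : (Fin n → ℝ) → ℕ) :=
  fun z _ hm => (eventually_forall_mul_pos z).mono fun _ hy =>
    (splus_le_splus_of_forall_mul_pos hy).trans_lt hm

lemma frequently_splus_le_sminus (z : Fin n → ℝ) : ∃ᶠ y in 𝓝 z, splus z ≤ sminus y := by
  obtain ⟨σ, -, hσ⟩ := Finset.exists_mem_eq_sup Finset.univ Finset.univ_nonempty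
    fun σ => sminus (fillZeros z σ)
  set c := fillZeros z σ
  have hpath : Tendsto (fun t : ℝ => z + t • (c - z)) (𝓝[>] 0) (𝓝 z) := by
    have : Continuous fun t : ℝ => z + t • (c - z) := by fun_prop
    simpa using (this.tendsto 0).mono_left nhdsWithin_le_nhds
  refine hpath.frequently (Eventually.frequently ?_)
  filter_upwards [self_mem_nhdsWithin] with t (ht : 0 < t)
  have hsign : ∀ i, 0 < (z + t • (c - z)) i * c i := by
    intro i
    by_cases hzi : z i = 0
    · simpa [hzi, mul_assoc] using mul_pos ht (mul_self_pos.2 (fillZeros_ne_zero z σ i))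
    · simpa [c, fillZeros_of_ne_zero σ hzi] using mul_self_pos.2 hzi
  rw [splus_eq_sup_sminus_fillZeros, hσ, sminus_eq_of_forall_mul_pos hsign]

lemma isClosed_setOf_sminus_le (m : ℕ) : IsClosed {z : Fin n → ℝ | sminus z ≤ m} :=
  lowerSemicontinuous_sminus.isClosed_preimage m

lemma interior_setOf_sminus_le (m : ℕ) :
    interior {z : Fin n → ℝ | sminus z ≤ m} = {z | splus z ≤ m} := by
  refine subset_antisymm (fun z hz => ?_) ?_
  · obtain ⟨y, hzy, hy⟩ := ((frequently_splus_le_sminus z).and_eventually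
      (mem_interior_iff_mem_nhds.1 hz)).exists
    exact hzy.trans hy
  · have hopen : IsOpen {z : Fin n → ℝ | splus z ≤ m} := by
      simpa only [Set.preimage, Set.mem_Iio, Nat.lt_succ_iff] using
        upperSemicontinuous_splus.isOpen_preimage (m + 1)
    exact hopen.subset_interior_iff.2 fun z hz => (sminus_le_splus z).trans hz

end

theorem stmt1_general (n k : ℕ) :
    {z : Fin n → ℝ | splus z ≤ k - 1} = interior {z : Fin n → ℝ | sminus z ≤ k - 1} ∧
    IsClosed {z : Fin n → ℝ | sminus z ≤ k - 1} :=
  ⟨(interior_setOf_sminus_le _).symm, isClosed_setOf_sminus_le _⟩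

/-- `P^k_+` is the interior of `P^k_-`, and `P^k_-` is closed. -/
theorem stmt1 (n k : ℕ) (hk : 1 ≤ k) (hkn : k ≤ n) :
    {z : Fin n → ℝ | splus z ≤ k - 1} = interior {z : Fin n → ℝ | sminus z ≤ k - 1} ∧
    IsClosed {z : Fin n → ℝ | sminus z ≤ k - 1} :=
  stmt1_general n k
end

section
/- If A in R^{n×m} (m ≤ n) is strictly sign-regular (for each k ≤ m, all k×k minors nonzero with a common sign), then s^+(Ax) ≤ s^-(x) for all nonzero x in R^m. -/
open Classical

/-!
Let `k = s⁻(x)` and group the support of `x` into its `k + 1` consecutive blocks of constant sign,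
the signs alternating from block to block. Then `A x = B 1`, where column `s` of `B` is the sum of
the columns of `A` in block `s` weighted by `x`. By multilinearity every `(k+1) × (k+1)` minor of
`B` is a combination of `(k+1) × (k+1)` minors of `A` with nonnegative weights, not all zero, so
these minors of `B` are nonzero and share one sign.

If `s⁺(A x) > k`, there are `k + 2` rows on which `A x` weakly alternates in sign. The matrix
`[A x | B]` on these rows is singular; expanding its determinant along the first column gives a
vanishing sum of terms of one sign, so `A x` vanishes on these rows. Then `B 1 = 0` on `k + 1` of
them, contradicting the nonsingularity of the corresponding minor of `B`.
-/

lemma List.filter_take_add_one {α : Type*} (p : α → Bool) {l : List α} {i : ℕ}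
    (h : i < l.length) : (l.take (i + 1)).filter p = (l.take i).filter p ++ [l[i]].filter p := by
  rw [List.take_add_one, List.getElem?_eq_getElem h, Option.toList_some, List.filter_append]

lemma signVarAux_le_append (l l' : List ℝ) : signVarAux l ≤ signVarAux (l ++ l') := by
  induction l with
  | nil => simp [signVarAux]
  | cons a t ih =>
    cases t with
    | nil => simp [signVarAux]
    | cons b t => simp only [List.cons_append, signVarAux] at ih ⊢; omega

lemma signVarAux_append_singleton_le (l : List ℝ) (a : ℝ) :
    signVarAux (l ++ [a]) ≤ signVarAux l + 1 := by
  induction l with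
  | nil => simp [signVarAux]
  | cons b t ih =>
    cases t with
    | nil => simp only [signVarAux, List.cons_append, List.nil_append]; split <;> omega
    | cons c t => simp only [List.cons_append, signVarAux] at ih ⊢; omega

lemma headD_mul_neg_one_pow_signVarAux_mul_pos (L : List ℝ) (b : ℝ)
    (hL : ∀ z ∈ L ++ [b], z ≠ 0) :
    0 < (L ++ [b]).headD 0 * (-1) ^ signVarAux (L ++ [b]) * b := by
  induction L with
  | nil =>
    have hb : b ≠ 0 := hL b (by simp)
    simpa [signVarAux] using mul_self_pos.2 hb
  | cons a L ih =>
    obtain ⟨c, t, hct⟩ := List.exists_cons_of_ne_nil (List.append_ne_nil_of_right_ne_nil L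
      (List.cons_ne_nil b []))
    have ha : a ≠ 0 := hL a (by simp)
    have hc : c ≠ 0 := hL c (by simp [hct])
    have ih := ih fun z hz => hL z (List.mem_cons_of_mem a hz)
    rw [hct] at ih
    rw [List.cons_append, hct]
    simp only [List.headD_cons, signVarAux] at ih ⊢
    set q := (-1 : ℝ) ^ signVarAux (c :: t)
    have hcc := mul_self_pos.2 hc
    split_ifs with hac
    · rw [pow_add, pow_one]
      nlinarith [mul_pos (neg_pos.2 hac) ih]
    · rw [zero_add]
      have : 0 < a * c := lt_of_le_of_ne (not_lt.1 hac) (mul_ne_zero ha hc).symm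
      nlinarith [mul_pos this ih]

/-- `prefixVar l (j + 1)` is the index of the sign block of the nonzero entries of `l` that
contains `l[j]`. -/
noncomputable def prefixVar (l : List ℝ) (i : ℕ) : ℕ :=
  signVarAux ((l.take i).filter fun a => decide (a ≠ 0))

section prefixVar

variable (l : List ℝ)

lemma prefixVar_zero : prefixVar l 0 = 0 := by simp [prefixVar, signVarAux]

lemma prefixVar_of_length_le {i : ℕ} (h : l.length ≤ i) :
    prefixVar l i = signVarAux (l.filter fun a => decide (a ≠ 0)) := by
  rw [prefixVar, List.take_of_length_le h]

lemma prefixVar_succ_of_eq_zero {i : ℕ} (h : ∀ hi : i < l.length, l[i] = 0) :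
    prefixVar l (i + 1) = prefixVar l i := by
  by_cases hi : i < l.length
  · rw [prefixVar, prefixVar, List.filter_take_add_one _ hi]
    simp [h hi]
  · rw [prefixVar_of_length_le l (by omega), prefixVar_of_length_le l (by omega)]

lemma monotone_prefixVar : Monotone (prefixVar l) := by
  refine monotone_nat_of_le_succ fun i => ?_
  by_cases hi : i < l.length
  · rw [prefixVar, prefixVar, List.filter_take_add_one _ hi]
    exact signVarAux_le_append _ _
  · rw [prefixVar_succ_of_eq_zero l fun h => absurd h hi]

lemma prefixVar_succ_le (i : ℕ) : prefixVar l (i + 1) ≤ prefixVar l i + 1 := by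
  by_cases hi : i < l.length
  · by_cases h0 : l[i] = 0
    · simp [prefixVar_succ_of_eq_zero l fun _ => h0]
    · rw [prefixVar, prefixVar, List.filter_take_add_one _ hi]
      simpa [h0] using signVarAux_append_singleton_le _ _
  · simp [prefixVar_succ_of_eq_zero l fun h => absurd h hi]

lemma headD_mul_neg_one_pow_prefixVar_mul_pos {j : ℕ} (hj : j < l.length) (h0 : l[j] ≠ 0) :
    0 < (l.filter fun a => decide (a ≠ 0)).headD 0 * (-1) ^ prefixVar l (j + 1) * l[j] := by
  have hsplit := List.filter_take_add_one (fun a => decide (a ≠ 0)) hj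
  simp only [h0, ne_eq, not_false_eq_true, decide_true, List.filter_cons_of_pos,
    List.filter_nil] at hsplit
  have hhead : (l.filter fun a => decide (a ≠ 0)).headD 0 =
      ((l.take (j + 1)).filter fun a => decide (a ≠ 0)).headD 0 := by
    conv_lhs => rw [← List.take_append_drop (j + 1) l, List.filter_append]
    rw [hsplit]
    simp
  rw [hhead, prefixVar, hsplit]
  refine headD_mul_neg_one_pow_signVarAux_mul_pos _ _ fun z hz => ?_
  rw [← hsplit] at hz
  simpa using (List.mem_filter.1 hz).2

lemma exists_prefixVar_succ_eq_of_pos {s N : ℕ} (hs : 0 < s) (hsN : s ≤ prefixVar l N) :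
    ∃ j, ∃ hj : j < l.length, l[j] ≠ 0 ∧ prefixVar l (j + 1) = s := by
  induction N with
  | zero => simp [prefixVar_zero] at hsN; omega
  | succ N ih =>
    by_cases h : s ≤ prefixVar l N
    · exact ih h
    · have hstep : prefixVar l (N + 1) ≠ prefixVar l N := by
        have := prefixVar_succ_le l N; omega
      by_cases hN : N < l.length
      · exact ⟨N, hN, fun h0 => hstep (prefixVar_succ_of_eq_zero l fun _ => h0),
          by have := prefixVar_succ_le l N; omega⟩
      · exact absurd (prefixVar_succ_of_eq_zero l fun h => absurd h hN) hstep

lemma exists_prefixVar_succ_eq_zero (h : ∃ j, ∃ hj : j < l.length, l[j] ≠ 0) :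
    ∃ j, ∃ hj : j < l.length, l[j] ≠ 0 ∧ prefixVar l (j + 1) = 0 := by
  obtain ⟨hj, h0⟩ := Nat.find_spec h
  refine ⟨Nat.find h, hj, h0, ?_⟩
  have hnil : ((l.take (Nat.find h)).filter fun a => decide (a ≠ 0)) = [] := by
    refine List.filter_eq_nil_iff.2 fun a ha => ?_
    obtain ⟨i, hi, rfl⟩ := List.mem_iff_getElem.1 ha
    rw [List.length_take] at hi
    have := Nat.find_min h (show i < Nat.find h by omega)
    simp_all
  rw [prefixVar, List.filter_take_add_one _ hj, hnil]
  simp [h0, signVarAux]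

end prefixVar

lemma exists_sign_blocks {m : ℕ} (x : Fin m → ℝ) (hx : x ≠ 0) :
    ∃ (ε : ℝ) (T : Fin m → Fin (sminus x + 1)), Monotone T ∧
      (∀ j, x j ≠ 0 → 0 < ε * (-1) ^ (T j : ℕ) * x j) ∧ ∀ s, ∃ j, T j = s ∧ x j ≠ 0 := by
  set l := List.ofFn x
  have hlen : l.length = m := List.length_ofFn
  have hK : prefixVar l m = sminus x := prefixVar_of_length_le l hlen.le
  have hT : ∀ j : Fin m, prefixVar l (j + 1) < sminus x + 1 := fun j =>
    Nat.lt_succ_of_le (hK ▸ monotone_prefixVar l (by omega : (j : ℕ) + 1 ≤ m))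
  refine ⟨(l.filter fun a => decide (a ≠ 0)).headD 0, fun j => ⟨_, hT j⟩,
    fun i j hij => Fin.mk_le_mk.2 (monotone_prefixVar l (by simpa using hij)),
    fun j h0 => by
      simpa [l] using headD_mul_neg_one_pow_prefixVar_mul_pos l (j := j) (by omega)
        (by simpa [l] using h0), ?_⟩
  intro s
  obtain ⟨i, hi⟩ := Function.ne_iff.1 hx
  obtain ⟨j, hj, h0, hs⟩ : ∃ j, ∃ hj : j < l.length, l[j] ≠ 0 ∧ prefixVar l (j + 1) = s := by
    rcases Nat.eq_zero_or_pos (s : ℕ) with hs | hs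
    · rw [hs]
      exact exists_prefixVar_succ_eq_zero l ⟨i, by omega, by simpa [l] using hi⟩
    · exact exists_prefixVar_succ_eq_of_pos l hs (N := m) (by rw [hK]; exact Nat.lt_succ_iff.1 s.2)
  exact ⟨⟨j, by omega⟩, Fin.ext hs, by simpa [l] using h0⟩

lemma Monotone.strictMono_of_leftInverse {α β : Type*} [LinearOrder α] [Preorder β]
    {T : α → β} {r : β → α} (hT : Monotone T) (h : Function.LeftInverse T r) : StrictMono r :=
  fun s s' hss' => lt_of_not_ge fun h' => hss'.not_ge <| by simpa only [h _] using hT h'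

lemma exists_strictMono_section {m p : ℕ} {T : Fin m → Fin p} (hT : Monotone T)
    {P : Fin m → Prop} (h : ∀ s, ∃ j, T j = s ∧ P j) :
    ∃ r : Fin p → Fin m, StrictMono r ∧ ∀ s, T (r s) = s ∧ P (r s) := by
  choose r hr using h
  exact ⟨r, hT.strictMono_of_leftInverse fun s => (hr s).1, hr⟩

lemma exists_strictMono_alternating_of_le_sminus {n p : ℕ} (z : Fin n → ℝ) (hz : z ≠ 0)
    (hp : p ≤ sminus z) :
    ∃ δ : ℝ, ∃ g : Fin (p + 1) → Fin n, StrictMono g ∧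
      ∀ s : Fin (p + 1), 0 < δ * (-1) ^ (s : ℕ) * z (g s) := by
  obtain ⟨δ, T, hT, hsign, hsurj⟩ := exists_sign_blocks z hz
  obtain ⟨r, hr, hrT⟩ := exists_strictMono_section hT hsurj
  have hle : p + 1 ≤ sminus z + 1 := by omega
  refine ⟨δ, r ∘ Fin.castLE hle, hr.comp (Fin.strictMono_castLE hle), fun s => ?_⟩
  have := hsign _ (hrT (Fin.castLE hle s)).2
  rwa [(hrT _).1, Fin.val_castLE] at this

lemma exists_weakly_alternating_of_lt_splus {n p : ℕ} (y : Fin n → ℝ) (h : p < splus y) :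
    ∃ δ : ℝ, δ ≠ 0 ∧ ∃ g : Fin (p + 2) → Fin n, StrictMono g ∧
      ∀ s : Fin (p + 2), 0 ≤ δ * (-1) ^ (s : ℕ) * y (g s) := by
  obtain ⟨σ, -, hσ⟩ := Finset.lt_sup_iff.1 h
  set z : Fin n → ℝ := fun i => if y i = 0 then (if σ i then 1 else -1) else y i
  have hz0 : ∀ i, z i ≠ 0 := fun i => by by_cases hi : y i = 0 <;> simp [z, hi]; split <;> simp
  have hsminus : sminus z = signVarAux (List.ofFn z) :=
    congrArg signVarAux (List.filter_eq_self.2 fun a ha => by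
      obtain ⟨i, rfl⟩ := List.mem_ofFn.1 ha
      simpa using hz0 i)
  have hn : n ≠ 0 := by rintro rfl; simp [signVarAux] at hσ
  have hz : z ≠ 0 := fun h => hz0 ⟨0, by omega⟩ (congrFun h _)
  obtain ⟨δ, g, hg, halt⟩ := exists_strictMono_alternating_of_le_sminus z hz (p := p + 1)
    (by omega)
  refine ⟨δ, fun h => by simpa [h] using halt 0, g, hg, fun s => ?_⟩
  by_cases hs : y (g s) = 0
  · simp [hs]
  · simpa [z, hs] using (halt s).le

lemma SSRk.exists_pos_mul_det {n m k : ℕ} {A : Matrix (Fin n) (Fin m) ℝ} (h : SSRk A k) :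
    ∃ d : ℝ, ∀ (α : Fin k → Fin n) (β : Fin k → Fin m), StrictMono α → StrictMono β →
      0 < d * (A.submatrix α β).det := by
  rcases h with h | h
  · exact ⟨1, fun α β hα hβ => by simpa using h α β hα hβ⟩
  · exact ⟨-1, fun α β hα hβ => by simpa using h α β hα hβ⟩
namespace Matrix

variable {R : Type*} [CommRing R]

lemma det_mul_eq_sum_det_submatrix {n ι : Type*} [Fintype n] [DecidableEq n] [Fintype ι]
    (A : Matrix n ι R) (B : Matrix ι n R) :
    (A * B).det = ∑ r : n → ι, (∏ i, B (r i) i) * (A.submatrix id r).det := by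
  simp only [det_apply', mul_apply, Finset.prod_univ_sum, Finset.mul_sum,
    Fintype.piFinset_univ]
  rw [Finset.sum_comm]
  refine Finset.sum_congr rfl fun r _ => Finset.sum_congr rfl fun σ _ => ?_
  simp only [submatrix_apply, id, Finset.prod_mul_distrib]
  ring

/-- Column `s` of `A * blockMatrix T x` is the sum of the columns `j` of `A` with `T j = s`,
weighted by `x j`. -/
def blockMatrix {m p : ℕ} (T : Fin m → Fin p) (x : Fin m → R) : Matrix (Fin m) (Fin p) R :=
  of fun j s => if T j = s then x j else 0

lemma blockMatrix_mulVec_one {m p : ℕ} (T : Fin m → Fin p) (x : Fin m → R) :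
    blockMatrix T x *ᵥ 1 = x := by
  ext j
  simp [blockMatrix, mulVec, dotProduct]

lemma det_mul_blockMatrix_pos [LinearOrder R] [IsStrictOrderedRing R] {m p : ℕ}
    (A : Matrix (Fin p) (Fin m) R) {T : Fin m → Fin p} (hT : Monotone T) {x : Fin m → R}
    {w : Fin p → R} (hw : ∀ j, 0 ≤ w (T j) * x j) (hsurj : ∀ s, ∃ j, T j = s ∧ 0 < w s * x j)
    {d : R} (hA : ∀ β, StrictMono β → 0 < d * (A.submatrix id β).det) :
    0 < d * (∏ s, w s) * (A * blockMatrix T x).det := by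
  have hterm : ∀ r : Fin p → Fin m,
      d * (∏ s, w s) * ((∏ s, blockMatrix T x (r s) s) * (A.submatrix id r).det) =
        (∏ s, w s * blockMatrix T x (r s) s) * (d * (A.submatrix id r).det) := fun r => by
    rw [Finset.prod_mul_distrib]; ring
  rw [det_mul_eq_sum_det_submatrix, Finset.mul_sum]
  simp only [hterm]
  -- only the sections `r` of `T` contribute, and these are strictly monotone
  choose r hr using hsurj
  have hr_mono : StrictMono r := hT.strictMono_of_leftInverse fun s => (hr s).1
  refine Finset.sum_pos' (fun r' _ => ?_) ⟨r, Finset.mem_univ _, mul_pos ?_ (hA r hr_mono)⟩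
  · by_cases hr' : Function.LeftInverse T r'
    · refine mul_nonneg (Finset.prod_nonneg fun s _ => ?_)
        (hA r' (hT.strictMono_of_leftInverse hr')).le
      simpa [blockMatrix, hr' s] using hw (r' s)
    · obtain ⟨s, hs⟩ := not_forall.1 hr'
      rw [Finset.prod_eq_zero (Finset.mem_univ s) (by simp [blockMatrix, hs]), zero_mul]
  · exact Finset.prod_pos fun s _ => by simpa [blockMatrix, (hr s).1] using (hr s).2

/-- Laplace expansion along the first column of the singular matrix `[M c | M]`. -/
lemma sum_neg_one_pow_mulVec_mul_det_eq_zero {p : ℕ} (M : Matrix (Fin (p + 1)) (Fin p) R)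
    (c : Fin p → R) :
    ∑ i : Fin (p + 1), (-1) ^ (i : ℕ) * (M *ᵥ c) i * (M.submatrix i.succAbove id).det = 0 := by
  let C : Matrix (Fin (p + 1)) (Fin (p + 1)) R := of fun i => Fin.cons ((M *ᵥ c) i) (M i)
  have hC : C *ᵥ Fin.cons (-1) c = 0 := by
    ext i
    simp [C, mulVec, dotProduct, Fin.sum_univ_succ]
  have hdet : C.det = 0 :=
    det_eq_zero_of_mulVec_eq_zero_of_mem_nonZeroDivisors hC (i := 0)
      (by simpa using isUnit_one.neg.mem_nonZeroDivisors)
  have hminor : ∀ i : Fin (p + 1),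
      C.submatrix i.succAbove Fin.succ = M.submatrix i.succAbove id := fun i => by
    ext; simp [C]
  simpa [det_succ_column_zero, hminor, C] using hdet

lemma eq_zero_of_alternating_mulVec [LinearOrder R] [IsStrictOrderedRing R] {p : ℕ}
    (M : Matrix (Fin (p + 1)) (Fin p) R) {η δ : R} (hδ : δ ≠ 0)
    (hM : ∀ i : Fin (p + 1), 0 < η * (M.submatrix i.succAbove id).det) {c : Fin p → R}
    (halt : ∀ i : Fin (p + 1), 0 ≤ δ * (-1) ^ (i : ℕ) * (M *ᵥ c) i) : c = 0 := by
  have hsum : ∑ i : Fin (p + 1),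
      δ * (-1) ^ (i : ℕ) * (M *ᵥ c) i * (η * (M.submatrix i.succAbove id).det) = 0 := by
    rw [← mul_zero (δ * η), ← sum_neg_one_pow_mulVec_mul_det_eq_zero M c, Finset.mul_sum]
    exact Finset.sum_congr rfl fun i _ => by ring
  have hMc : ∀ i, (M *ᵥ c) i = 0 := fun i => by
    have := (Finset.sum_eq_zero_iff_of_nonneg fun i _ => mul_nonneg (halt i) (hM i).le).1 hsum i
      (Finset.mem_univ i)
    simpa [hδ, (hM i).ne'] using this
  exact eq_zero_of_mulVec_eq_zero (right_ne_zero_of_mul (hM 0).ne') (funext fun i => hMc _)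

end Matrix

theorem stmt12_general (n m : ℕ)
    (A : Matrix (Fin n) (Fin m) ℝ)
    (hssr : ∀ k, 1 ≤ k → k ≤ m → SSRk A k) :
    ∀ x : Fin m → ℝ, x ≠ 0 → splus (A.mulVec x) ≤ sminus x := by
  intro x hx
  obtain ⟨ε, T, hT, hsign, hsurj⟩ := exists_sign_blocks x hx
  obtain ⟨r, hr, -⟩ := exists_strictMono_section hT hsurj
  have hKm : sminus x + 1 ≤ m := by simpa using Fintype.card_le_of_injective r hr.injective
  obtain ⟨d, hd⟩ := (hssr (sminus x + 1) (by omega) hKm).exists_pos_mul_det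
  set B := A * Matrix.blockMatrix T x
  have hminor : ∀ α : Fin (sminus x + 1) → Fin n, StrictMono α →
      0 < d * (∏ s : Fin (sminus x + 1), ε * (-1) ^ (s : ℕ)) * (B.submatrix α id).det := fun α hα =>
    Matrix.det_mul_blockMatrix_pos (A.submatrix α id) hT
      (fun j => by by_cases h0 : x j = 0 <;> simp [h0, (hsign j _).le])
      (fun s => (hsurj s).imp fun j hj => ⟨hj.1, hj.1 ▸ hsign j hj.2⟩)
      (fun β hβ => hd α β hα hβ)
  have hAx : A.mulVec x = B.mulVec 1 := by
    rw [← Matrix.mulVec_mulVec, Matrix.blockMatrix_mulVec_one]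
  by_contra! hlt
  obtain ⟨δ, hδ, g, hg, halt⟩ := exists_weakly_alternating_of_lt_splus _ hlt
  refine one_ne_zero <| Matrix.eq_zero_of_alternating_mulVec (B.submatrix g id) hδ
    (fun i => hminor _ (hg.comp (Fin.strictMono_succAbove i))) (c := 1) fun i => ?_
  rw [show (B.submatrix g id).mulVec 1 i = A.mulVec x (g i) by rw [hAx]; rfl]
  exact halt i

/-- if `A ∈ ℝ^{n×m}` (`m ≤ n`) is strictly sign-regular,
then `s⁺(Ax) ≤ s⁻(x)` for all nonzero `x`. -/
theorem stmt12 (n m : ℕ) (hm : m ≤ n)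
    (A : Matrix (Fin n) (Fin m) ℝ)
    (hssr : ∀ k, 1 ≤ k → k ≤ m → SSRk A k) :
    ∀ x : Fin m → ℝ, x ≠ 0 → splus (A.mulVec x) ≤ sminus x :=
  stmt12_general n m A hssr
end
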